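/- arXiv:1212.2591 — 8 statements merged into one kernel-verified Lean document; each statement's English description precedes it below -/
import Mathlib

section
/- For γ̄ > 0 and ε > 0, the minimizer over ν ∈ [0,1] of δ_t(ν) = 1/(ν·γ̄ + 1) + ε/((1−ν)·γ̄ + 1) is: ν* = 0 if √ε ≥ γ̄ + 1; ν* = 1 if √ε ≤ 1/(γ̄ + 1); and ν* = (1 + (1−√ε)/γ̄)/(1+√ε) otherwise. -/
/-!
Write `a = νγ + 1` and `b = (1 - ν)γ + 1`, so that `a + b = γ + 2` and `a, b ∈ [1, γ + 1]`, and
`s = √ε`. By the two-term Cauchy–Schwarz (Sedrakyan) inequality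
`1 / a + s² / b ≥ (1 + s)² / (a + b) = (1 + s)² / (γ + 2)`, with equality when `b = s a`,
which is exactly the stated interior point. At the endpoints the chord estimates
`1 / a ≥ 1 - (a - 1)` and `s² / b - s² / (γ + 1) ≥ s² (a - 1) / (γ + 1)²` show that `ν = 0` is
optimal once `s ≥ γ + 1`; exchanging the roles of the two terms handles `ν = 1`.
-/

lemma sq_add_div_add_le_sq_div_add_sq_div {x y a b : ℝ} (ha : 0 < a) (hb : 0 < b) :
    (x + y) ^ 2 / (a + b) ≤ x ^ 2 / a + y ^ 2 / b := by
  rw [div_add_div _ _ ha.ne' hb.ne', div_le_div_iff₀ (by positivity) (by positivity)]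
  nlinarith [sq_nonneg (x * b - y * a), mul_pos ha hb]

-- Along `a + b = 1 + c`, the slope of `p / a + q / b` at the endpoint `a = 1` is `q / c² - p`.
lemma add_div_le_div_add_div_of_mul_sq_le {p q a b c : ℝ} (hp : 0 ≤ p) (ha : 1 ≤ a)
    (hb : 0 < b) (habc : a + b = 1 + c) (hq : p * c ^ 2 ≤ q) :
    p + q / c ≤ p / a + q / b := by
  have hc : 0 < c := by linarith
  have hq0 : 0 ≤ q := (mul_nonneg hp (sq_nonneg c)).trans hq
  have hpa : p - p * (a - 1) ≤ p / a := by
    rw [le_div_iff₀ (by linarith)]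
    nlinarith [mul_nonneg hp (mul_nonneg (sub_nonneg.2 ha) (sub_nonneg.2 ha))]
  have hqb : q / c + p * (a - 1) ≤ q / b := by
    have hq' : q / c + q * (a - 1) / c ^ 2 ≤ q / b := by
      rw [div_add_div _ _ hc.ne' (by positivity), div_le_div_iff₀ (by positivity) hb]
      have ha' : a - 1 = c - b := by linarith
      rw [ha']
      nlinarith [mul_nonneg (mul_nonneg hq0 hc.le) (sq_nonneg (c - b))]
    calc q / c + p * (a - 1) = q / c + p * c ^ 2 * (a - 1) / c ^ 2 := by field_simp
      _ ≤ q / c + q * (a - 1) / c ^ 2 := by gcongr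
      _ ≤ q / b := hq'
  linarith

noncomputable def deltaT (γ ε ν : ℝ) : ℝ := 1 / (ν * γ + 1) + ε / ((1 - ν) * γ + 1)

section

variable {γ ε : ℝ}

lemma isMinOn_deltaT_zero (hγ : 0 ≤ γ) (h : γ + 1 ≤ Real.sqrt ε) :
    IsMinOn (deltaT γ ε) (Set.Icc 0 1) 0 := by
  rw [isMinOn_iff]
  rintro ν ⟨hν0, hν1⟩
  have hsq : 1 * (γ + 1) ^ 2 ≤ ε := by
    rw [one_mul, ← Real.le_sqrt' (by linarith)]
    exact h
  have key := add_div_le_div_add_div_of_mul_sq_le zero_le_one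
    (by nlinarith : 1 ≤ ν * γ + 1) (by nlinarith : 0 < (1 - ν) * γ + 1) (by ring) hsq
  simpa only [deltaT, zero_mul, zero_add, sub_zero, one_mul, div_one] using key

lemma isMinOn_deltaT_one (hγ : 0 ≤ γ) (hε : 0 ≤ ε) (h : Real.sqrt ε ≤ 1 / (γ + 1)) :
    IsMinOn (deltaT γ ε) (Set.Icc 0 1) 1 := by
  rw [isMinOn_iff]
  rintro ν ⟨hν0, hν1⟩
  have hsq : ε * (γ + 1) ^ 2 ≤ 1 := by
    rw [← le_div_iff₀ (by positivity), ← one_div_pow, ← Real.sqrt_le_left (by positivity)]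
    exact h
  have key := add_div_le_div_add_div_of_mul_sq_le hε
    (by nlinarith : 1 ≤ (1 - ν) * γ + 1) (by nlinarith : 0 < ν * γ + 1) (by ring) hsq
  simp only [deltaT, one_mul, sub_self, zero_mul, zero_add, div_one]
  linarith

lemma isMinOn_deltaT_stationary (hγ : 0 < γ) (hε : 0 < ε) :
    IsMinOn (deltaT γ ε) (Set.Icc 0 1)
      ((1 + (1 - Real.sqrt ε) / γ) / (1 + Real.sqrt ε)) := by
  rw [isMinOn_iff]
  rintro ν ⟨hν0, hν1⟩
  have hs : Real.sqrt ε ^ 2 = ε := Real.sq_sqrt hε.le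
  set s := Real.sqrt ε
  have hs0 : 0 < s := Real.sqrt_pos.2 hε
  have value : deltaT γ ε ((1 + (1 - s) / γ) / (1 + s)) = (1 + s) ^ 2 / (γ + 2) := by
    have ha₀ : (1 + (1 - s) / γ) / (1 + s) * γ + 1 = (γ + 2) / (1 + s) := by
      field_simp
      ring
    have hb₀ : (1 - (1 + (1 - s) / γ) / (1 + s)) * γ + 1 = s * (γ + 2) / (1 + s) := by
      field_simp
      ring
    rw [deltaT, ha₀, hb₀, ← hs]
    field_simp
  calc deltaT γ ε ((1 + (1 - s) / γ) / (1 + s))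
      = (1 + s) ^ 2 / ((ν * γ + 1) + ((1 - ν) * γ + 1)) := by rw [value]; congr 1; ring
    _ ≤ 1 ^ 2 / (ν * γ + 1) + s ^ 2 / ((1 - ν) * γ + 1) :=
      sq_add_div_add_le_sq_div_add_sq_div (by nlinarith) (by nlinarith)
    _ = deltaT γ ε ν := by rw [one_pow, hs]; rfl

end

theorem deltaT_minimizer (γ ε : ℝ) (hγ : 0 < γ) (hε : 0 < ε) :
    (Real.sqrt ε ≥ γ + 1 →
      IsMinOn (fun ν : ℝ => 1 / (ν * γ + 1) + ε / ((1 - ν) * γ + 1))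
        (Set.Icc (0:ℝ) 1) 0) ∧
    (Real.sqrt ε ≤ 1 / (γ + 1) →
      IsMinOn (fun ν : ℝ => 1 / (ν * γ + 1) + ε / ((1 - ν) * γ + 1))
        (Set.Icc (0:ℝ) 1) 1) ∧
    (1 / (γ + 1) < Real.sqrt ε → Real.sqrt ε < γ + 1 →
      IsMinOn (fun ν : ℝ => 1 / (ν * γ + 1) + ε / ((1 - ν) * γ + 1))
        (Set.Icc (0:ℝ) 1) ((1 + (1 - Real.sqrt ε) / γ) / (1 + Real.sqrt ε))) :=
  ⟨fun h => isMinOn_deltaT_zero hγ.le h, fun h => isMinOn_deltaT_one hγ.le hε.le h,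
    fun _ _ => isMinOn_deltaT_stationary hγ hε⟩
end

section
/- For fixed β > 0 and γ_e > 0, the function ρ ↦ γ_e·g(β,ρ)·(1 + (ρ/β)(1+g(β,ρ))²)/(γ_e + (1+g(β,ρ))²) on (0,∞), where g(β,ρ) is the unique nonnegative solution of g = 1/(ρ + β/(1+g)), attains its maximum at ρ* = β/γ_e, and the maximum value equals g(β, β/γ_e). -/
/-!
Cleared of denominators, the fixed-point equation reads `ρ g (1 + g) = 1 + g - β g`, which
eliminates `ρ` from the SINR: along the curve `ρ ↦ g ρ` it equals `γ ((1 + g)² - β g²) / (β (γ + (1 + g)²))`, a function of `g` alone. If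
`a = g (β / γ)`, then `a` bounds this function on all of `ℝ`, because the gap
`a β (γ + (1 + x)²) - γ ((1 + x)² - β x²)` equals `β² a (x - a)² / (1 + a - β a)` and the fixed-point
equation at `ρ = β / γ` makes `1 + a - β a` positive. At `ρ = β / γ` the SINR equals `a` outright.
-/

noncomputable def sinrOfFixedPoint (β γ x : ℝ) : ℝ :=
  γ * ((1 + x) ^ 2 - β * x ^ 2) / (β * (γ + (1 + x) ^ 2))

section FixedPoint

variable {β ρ g : ℝ}

lemma pos_of_eq_one_div_add (hρ : 0 < ρ) (hβ : 0 ≤ β) (hg₀ : 0 ≤ g)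
    (hg : g = 1 / (ρ + β / (1 + g))) : 0 < g := by
  rw [hg]; positivity

lemma mul_add_eq_of_eq_one_div_add (hρ : 0 < ρ) (hβ : 0 ≤ β) (hg₀ : 0 ≤ g)
    (hg : g = 1 / (ρ + β / (1 + g))) : ρ * g * (1 + g) + β * g = 1 + g := by
  have hden : 0 < ρ + β / (1 + g) := by positivity
  rw [eq_div_iff hden.ne'] at hg
  field_simp at hg
  linarith

end FixedPoint

lemma sinr_eq_sinrOfFixedPoint {β γ ρ g : ℝ} (hβ : β ≠ 0) (hγ : 0 < γ)
    (hfix : ρ * g * (1 + g) + β * g = 1 + g) :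
    γ * g * (1 + ρ / β * (1 + g) ^ 2) / (γ + (1 + g) ^ 2) = sinrOfFixedPoint β γ g := by
  have hD : γ + (1 + g) ^ 2 ≠ 0 := by positivity
  unfold sinrOfFixedPoint
  field_simp
  linear_combination (1 + g) * hfix

lemma sinrOfFixedPoint_le {β γ a : ℝ} (hβ : 0 < β) (hγ : 0 < γ) (ha : 0 < a)
    (hfix : β / γ * a * (1 + a) + β * a = 1 + a) (x : ℝ) : sinrOfFixedPoint β γ x ≤ a := by
  have hfix' : γ * (1 + a - β * a) = β * a * (1 + a) := by
    field_simp at hfix; linarith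
  have hs : 0 < 1 + a - β * a :=
    pos_of_mul_pos_right (hfix' ▸ by positivity) hγ.le
  have hgap : (1 + a - β * a) * (a * β * (γ + (1 + x) ^ 2) - γ * ((1 + x) ^ 2 - β * x ^ 2))
      = β ^ 2 * a * (a - x) ^ 2 := by
    linear_combination (a * β - (1 + x) ^ 2 + β * x ^ 2) * hfix'
  have hgap_nonneg : 0 ≤ a * β * (γ + (1 + x) ^ 2) - γ * ((1 + x) ^ 2 - β * x ^ 2) :=
    nonneg_of_mul_nonneg_right (hgap ▸ by positivity) hs
  unfold sinrOfFixedPoint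
  rw [div_le_iff₀ (by positivity)]
  linarith

lemma sinr_at_div_eq_self {β γ a : ℝ} (hβ : β ≠ 0) (hγ : 0 < γ) :
    γ * a * (1 + ((β / γ) / β) * (1 + a) ^ 2) / (γ + (1 + a) ^ 2) = a := by
  have hD : γ + (1 + a) ^ 2 ≠ 0 := by positivity
  field_simp

theorem mcp_sinr_optimal_regularization (β γe : ℝ) (hβ : 0 < β) (hγe : 0 < γe)
    (g : ℝ → ℝ)
    (hg : ∀ ρ : ℝ, 0 < ρ → 0 ≤ g ρ ∧ g ρ = 1 / (ρ + β / (1 + g ρ))) :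
    IsMaxOn (fun ρ : ℝ => γe * g ρ * (1 + (ρ / β) * (1 + g ρ) ^ 2) / (γe + (1 + g ρ) ^ 2))
      (Set.Ioi 0) (β / γe) ∧
    γe * g (β / γe) * (1 + ((β / γe) / β) * (1 + g (β / γe)) ^ 2) / (γe + (1 + g (β / γe)) ^ 2)
      = g (β / γe) := by
  have hfix : ∀ ρ, 0 < ρ → ρ * g ρ * (1 + g ρ) + β * g ρ = 1 + g ρ := fun ρ hρ =>
    mul_add_eq_of_eq_one_div_add hρ hβ.le (hg ρ hρ).1 (hg ρ hρ).2
  have hopt : 0 < β / γe := div_pos hβ hγe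
  refine ⟨fun ρ hρ => ?_, sinr_at_div_eq_self hβ.ne' hγe⟩
  simp only [Set.mem_ofPred_eq, sinr_at_div_eq_self hβ.ne' hγe,
    sinr_eq_sinrOfFixedPoint hβ.ne' hγe (hfix ρ hρ)]
  exact sinrOfFixedPoint_le hβ hγe
    (pos_of_eq_one_div_add hopt hβ.le (hg _ hopt).1 (hg _ hopt).2) (hfix _ hopt) _
end

section
/- For ε ≥ 0 and 0 < X_t ≤ 1, the function f(x) = √(1−x) + ε·√(1 − X_t/x) is concave on the interval [X_t, 1]. -/
open Set Real

private lemma sqrt_comp_concave {s : Set ℝ} (_hs : Convex ℝ s) {f : ℝ → ℝ}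
    (hf : ConcaveOn ℝ s f) (hcont : ContinuousOn f s) (hpre : IsPreconnected s)
    (hnn : ∀ x ∈ s, 0 ≤ f x) :
    ConcaveOn ℝ s (fun x => Real.sqrt (f x)) := by
  have himg : f '' s ⊆ Ici 0 := by
    rintro _ ⟨x, hx, rfl⟩; exact hnn x hx
  have hconv : Convex ℝ (f '' s) := (hpre.image f hcont).ordConnected.convex
  have hg : ConcaveOn ℝ (f '' s) Real.sqrt :=
    Real.strictConcaveOn_sqrt.concaveOn.subset himg hconv
  have hmono : MonotoneOn Real.sqrt (f '' s) :=
    fun a _ b _ hab => Real.sqrt_le_sqrt hab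
  exact hg.comp hf hmono

theorem rvq_objective_concave (ε Xt : ℝ) (hε : 0 ≤ ε) (hXt : 0 < Xt) (hXt1 : Xt ≤ 1) :
    ConcaveOn ℝ (Set.Icc Xt 1)
      (fun x : ℝ => Real.sqrt (1 - x) + ε * Real.sqrt (1 - Xt / x)) := by
  have hconv : Convex ℝ (Icc Xt (1:ℝ)) := convex_Icc _ _
  have hpre : IsPreconnected (Icc Xt (1:ℝ)) := isPreconnected_Icc
  -- first term
  have h1 : ConcaveOn ℝ (Icc Xt 1) (fun x : ℝ => Real.sqrt (1 - x)) := by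
    apply sqrt_comp_concave hconv
    · have : ConcaveOn ℝ (Icc Xt (1:ℝ)) (fun x : ℝ => -x + 1) :=
        ((convexOn_id hconv).neg.add_const 1)
      convert this using 2 with x
      ring
    · exact (continuous_const.sub continuous_id).continuousOn
    · exact hpre
    · intro x hx; simp only [sub_nonneg]; exact hx.2
  -- second term (without ε)
  have h2 : ConcaveOn ℝ (Icc Xt 1) (fun x : ℝ => Real.sqrt (1 - Xt / x)) := by
    apply sqrt_comp_concave hconv
    · have hsub : Icc Xt (1:ℝ) ⊆ Ioi 0 := fun x hx => lt_of_lt_of_le hXt hx.1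
      have hinv : ConvexOn ℝ (Ioi (0:ℝ)) (fun x : ℝ => Xt * x ^ (-1 : ℤ)) := by
        simpa [smul_eq_mul] using (convexOn_zpow (𝕜 := ℝ) (-1)).smul hXt.le
      have : ConcaveOn ℝ (Icc Xt (1:ℝ)) (fun x : ℝ => -(Xt * x ^ (-1 : ℤ)) + 1) :=
        ((hinv.subset hsub hconv).neg.add_const 1)
      have heq : ∀ x : ℝ, -(Xt * x ^ (-1 : ℤ)) + 1 = 1 - Xt / x := by
        intro x; rw [zpow_neg_one, ← div_eq_mul_inv]; ring
      convert this using 2 with x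
      rw [heq]
    · apply ContinuousOn.sub continuousOn_const
      apply ContinuousOn.div continuousOn_const continuousOn_id
      intro x hx; exact (lt_of_lt_of_le hXt hx.1).ne'
    · exact hpre
    · intro x hx
      have hx0 : 0 < x := lt_of_lt_of_le hXt hx.1
      have : Xt / x ≤ 1 := (div_le_one hx0).mpr hx.1
      linarith
  have h2' : ConcaveOn ℝ (Icc Xt 1)
      (fun x : ℝ => ε * Real.sqrt (1 - Xt / x)) := by
    simpa [smul_eq_mul] using h2.smul hε
  exact h1.add h2'
end

section
/- For ε > 0 and 0 < X_t < 1, the maximizer x* of f(x) = √(1−x) + ε·√(1 − X_t/x) over [X_t, 1] is the unique solution in (X_t,1) of the quartic equation x⁴ − X_t·x³ + (ε·X_t)²·(x − 1) = 0. -/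
/-!
The derivative of `f` on `(Xt, 1)` has the sign of `ε Xt √(1 - x) - x² √(1 - Xt / x)`. Both terms
are positive, so this is also the sign of the difference of their squares, which is `-q x` for the
quartic `q`. On `[Xt, ∞)` the quartic is strictly increasing, with `q Xt < 0 < q 1`; hence it has a
single root `x*` in `(Xt, 1)`, and `f` increases on `[Xt, x*]` and decreases on `[x*, 1]`.
-/

open Set

def mcpQuartic (ε Xt x : ℝ) : ℝ := x ^ 4 - Xt * x ^ 3 + (ε * Xt) ^ 2 * (x - 1)

noncomputable def mcpObjective (ε Xt y : ℝ) : ℝ := √(1 - y) + ε * √(1 - Xt / y)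

theorem mcpQuartic_strictMonoOn (ε : ℝ) {Xt : ℝ} (hXt : 0 ≤ Xt) :
    StrictMonoOn (mcpQuartic ε Xt) (Ici Xt) := by
  intro x hx y _ hxy
  have hx0 : 0 ≤ x := hXt.trans hx
  have hy0 : 0 < y := hx0.trans_lt hxy
  have hyXt : 0 < y - Xt := sub_pos.2 (hx.trans_lt hxy)
  have hfactor : mcpQuartic ε Xt y - mcpQuartic ε Xt x = (y - x) *
      (y ^ 2 * (y - Xt) + y * x * (y - Xt) + x ^ 2 * (y - Xt) + x ^ 3 + (ε * Xt) ^ 2) := by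
    unfold mcpQuartic; ring
  refine sub_pos.1 (hfactor ▸ mul_pos (sub_pos.2 hxy) ?_)
  positivity

theorem exists_mcpQuartic_eq_zero {ε Xt : ℝ} (hε : ε ≠ 0) (hXt : 0 < Xt) (hXt1 : Xt < 1) :
    ∃ x ∈ Ioo Xt 1, mcpQuartic ε Xt x = 0 := by
  have hlow : mcpQuartic ε Xt Xt < 0 := by
    have : mcpQuartic ε Xt Xt = (ε * Xt) ^ 2 * (Xt - 1) := by unfold mcpQuartic; ring
    rw [this]
    exact mul_neg_of_pos_of_neg (by positivity) (by linarith)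
  have hhigh : 0 < mcpQuartic ε Xt 1 := by unfold mcpQuartic; linarith
  exact intermediate_value_Ioo hXt1.le (by unfold mcpQuartic; fun_prop) ⟨hlow, hhigh⟩

theorem mcpObjective_continuousOn (ε Xt : ℝ) : ContinuousOn (mcpObjective ε Xt) (Ioi 0) := by
  unfold mcpObjective
  exact ContinuousOn.add (by fun_prop) <| continuousOn_const.mul <|
    (continuousOn_const.sub (continuousOn_const.div continuousOn_id fun y hy => ne_of_gt hy)).sqrt

theorem mcpObjective_hasDerivAt (ε : ℝ) {Xt y : ℝ} (hXt : 0 < Xt) (hy : y ∈ Ioo Xt 1) :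
    HasDerivAt (mcpObjective ε Xt)
      ((ε * Xt * √(1 - y) - y ^ 2 * √(1 - Xt / y)) / (2 * √(1 - y) * √(1 - Xt / y) * y ^ 2)) y := by
  have hy0 : 0 < y := hXt.trans hy.1
  have hA : 0 < √(1 - y) := Real.sqrt_pos.2 (sub_pos.2 hy.2)
  have hB : 0 < 1 - Xt / y := sub_pos.2 ((div_lt_one hy0).2 hy.1)
  have hB' : 0 < √(1 - Xt / y) := Real.sqrt_pos.2 hB
  have hinner : HasDerivAt (fun t => 1 - Xt / t) (Xt / y ^ 2) y := by
    have h := ((hasDerivAt_inv hy0.ne').const_mul Xt).const_sub 1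
    simp only [← div_eq_mul_inv, mul_neg, neg_neg] at h
    exact h
  refine HasDerivAt.congr_deriv (f := mcpObjective ε Xt)
    ((((hasDerivAt_id' y).const_sub 1).sqrt (sub_pos.2 hy.2).ne').add
      ((hinner.sqrt hB.ne').const_mul ε)) ?_
  generalize √(1 - Xt / y) = B at hB' ⊢
  field_simp
  ring

theorem mcpQuartic_eq_sq_sub_sq (ε : ℝ) {Xt y : ℝ} (hy0 : 0 < y) (hXty : Xt ≤ y) (hy1 : y ≤ 1) :
    mcpQuartic ε Xt y = (y ^ 2 * √(1 - Xt / y)) ^ 2 - (ε * Xt * √(1 - y)) ^ 2 := by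
  rw [mul_pow, mul_pow _ √(1 - y), Real.sq_sqrt (sub_nonneg.2 hy1),
    Real.sq_sqrt (sub_nonneg.2 ((div_le_one hy0).2 hXty)), mcpQuartic]
  field_simp
  ring

theorem mcpObjective_deriv_pos_iff {ε Xt y : ℝ} (hε : 0 ≤ ε) (hXt : 0 < Xt) (hy : y ∈ Ioo Xt 1) :
    0 < deriv (mcpObjective ε Xt) y ↔ mcpQuartic ε Xt y < 0 := by
  have hy0 : 0 < y := hXt.trans hy.1
  have hA : 0 < √(1 - y) := Real.sqrt_pos.2 (sub_pos.2 hy.2)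
  have hB : 0 < √(1 - Xt / y) := Real.sqrt_pos.2 (sub_pos.2 ((div_lt_one hy0).2 hy.1))
  rw [(mcpObjective_hasDerivAt ε hXt hy).deriv, div_pos_iff_of_pos_right (by positivity), sub_pos,
    ← sq_lt_sq₀ (by positivity) (by positivity), mcpQuartic_eq_sq_sub_sq ε hy0 hy.1.le hy.2.le,
    sub_neg]

theorem mcpObjective_deriv_neg_iff {ε Xt y : ℝ} (hε : 0 ≤ ε) (hXt : 0 < Xt) (hy : y ∈ Ioo Xt 1) :
    deriv (mcpObjective ε Xt) y < 0 ↔ 0 < mcpQuartic ε Xt y := by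
  have hy0 : 0 < y := hXt.trans hy.1
  have hA : 0 < √(1 - y) := Real.sqrt_pos.2 (sub_pos.2 hy.2)
  have hB : 0 < √(1 - Xt / y) := Real.sqrt_pos.2 (sub_pos.2 ((div_lt_one hy0).2 hy.1))
  rw [(mcpObjective_hasDerivAt ε hXt hy).deriv, div_lt_iff₀ (by positivity), zero_mul, sub_neg,
    ← sq_lt_sq₀ (by positivity) (by positivity), mcpQuartic_eq_sq_sub_sq ε hy0 hy.1.le hy.2.le,
    sub_pos]

theorem mcpObjective_strictMonoOn {ε Xt x : ℝ} (hε : 0 ≤ ε) (hXt : 0 < Xt) (hx : x < 1)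
    (hqx : mcpQuartic ε Xt x = 0) : StrictMonoOn (mcpObjective ε Xt) (Icc Xt x) := by
  refine strictMonoOn_of_deriv_pos (convex_Icc _ _)
    ((mcpObjective_continuousOn ε Xt).mono fun y hy => hXt.trans_le hy.1) fun y hy => ?_
  rw [interior_Icc] at hy
  rw [mcpObjective_deriv_pos_iff hε hXt ⟨hy.1, hy.2.trans hx⟩, ← hqx]
  exact mcpQuartic_strictMonoOn ε hXt.le hy.1.le (hy.1.trans hy.2).le hy.2

theorem mcpObjective_strictAntiOn {ε Xt x : ℝ} (hε : 0 ≤ ε) (hXt : 0 < Xt) (hx : Xt < x)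
    (hqx : mcpQuartic ε Xt x = 0) : StrictAntiOn (mcpObjective ε Xt) (Icc x 1) := by
  refine strictAntiOn_of_deriv_neg (convex_Icc _ _)
    ((mcpObjective_continuousOn ε Xt).mono fun y hy => hXt.trans (hx.trans_le hy.1)) fun y hy => ?_
  rw [interior_Icc] at hy
  rw [mcpObjective_deriv_neg_iff hε hXt ⟨hx.trans hy.1, hy.2⟩, ← hqx]
  exact mcpQuartic_strictMonoOn ε hXt.le hx.le (hx.trans hy.1).le hy.1

theorem rvq_mcp_optimal_bit_allocation (ε Xt : ℝ) (hε : 0 < ε)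
    (hXt : 0 < Xt) (hXt1 : Xt < 1) :
    ∃ x : ℝ, x ∈ Set.Ioo Xt 1 ∧
      IsMaxOn (fun y : ℝ => Real.sqrt (1 - y) + ε * Real.sqrt (1 - Xt / y))
        (Set.Icc Xt 1) x ∧
      x ^ 4 - Xt * x ^ 3 + (ε * Xt) ^ 2 * (x - 1) = 0 ∧
      ∀ y ∈ Set.Ioo Xt 1, y ^ 4 - Xt * y ^ 3 + (ε * Xt) ^ 2 * (y - 1) = 0 → y = x := by
  obtain ⟨x, hx, hqx⟩ := exists_mcpQuartic_eq_zero hε.ne' hXt hXt1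
  refine ⟨x, hx, ?_, hqx, fun y hy hqy => ?_⟩
  · exact isMaxOn_Icc_of_mono_anti (mcpObjective_strictMonoOn hε.le hXt hx.2 hqx).monotoneOn
      (mcpObjective_strictAntiOn hε.le hXt hx.1 hqx).antitoneOn
  · exact (mcpQuartic_strictMonoOn ε hXt.le).injOn hy.1.le hx.1.le (hqy.trans hqx.symm)
end

section
/- For ρ > 0, β > 0, and ω_d, ω_c > 0, the cubic fixed-point equation Γ = 1/(ρ + β·ω_c/(1+ω_c·Γ) + β·ω_d/(1+ω_d·Γ)) has a unique positive real solution Γ. -/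
/-!
Multiplying through by the denominator, a positive `Γ` solves the equation iff `G Γ = 1`, where
`G x = ρ x + β ωc x / (1 + ωc x) + β ωd x / (1 + ωd x)` is continuous and strictly increasing on
`[0, ∞)` with `G 0 = 0` and `G (1 / ρ) ≥ 1`. The intermediate value theorem gives a solution and
strict monotonicity makes it unique.
-/

open Set

theorem existsUnique_pos_eq_of_strictMonoOn {f : ℝ → ℝ} {c M : ℝ}
    (hmono : StrictMonoOn f (Ici 0)) (hcont : ContinuousOn f (Ici 0))
    (hM : 0 ≤ M) (h0 : f 0 < c) (hcM : c ≤ f M) :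
    ∃! x, 0 < x ∧ f x = c := by
  obtain ⟨x, hx, hfx⟩ := intermediate_value_Icc hM (hcont.mono Icc_subset_Ici_self) ⟨h0.le, hcM⟩
  have hx0 : x ≠ 0 := by
    rintro rfl
    exact h0.ne hfx
  exact ⟨x, ⟨hx.1.lt_of_ne' hx0, hfx⟩, fun y ⟨hy, hfy⟩ =>
    hmono.injOn hy.le hx.1 (hfy.trans hfx.symm)⟩

theorem monotoneOn_mul_div_one_add_mul {ω : ℝ} (hω : 0 ≤ ω) :
    MonotoneOn (fun x => ω * x / (1 + ω * x)) (Ici 0) := by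
  intro a (ha : 0 ≤ a) b (hb : 0 ≤ b) hab
  have ha' : 0 < 1 + ω * a := by positivity
  have hb' : 0 < 1 + ω * b := by positivity
  dsimp only
  rw [div_le_div_iff₀ ha' hb']
  nlinarith [mul_le_mul_of_nonneg_left hab hω]

theorem monotoneOn_const_mul_mul_div_one_add_mul {β ω : ℝ} (hβ : 0 ≤ β) (hω : 0 ≤ ω) :
    MonotoneOn (fun x => β * (ω * x / (1 + ω * x))) (Ici 0) :=
  fun _ ha _ hb hab => mul_le_mul_of_nonneg_left (monotoneOn_mul_div_one_add_mul hω ha hb hab) hβ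

theorem continuousOn_mul_div_one_add_mul {ω : ℝ} (hω : 0 ≤ ω) :
    ContinuousOn (fun x => ω * x / (1 + ω * x)) (Ici 0) :=
  ContinuousOn.div (by fun_prop) (by fun_prop) fun x (hx : 0 ≤ x) => by positivity

section

variable {ρ β ωd ωc : ℝ}

noncomputable def cbfLoad (ρ β ωd ωc x : ℝ) : ℝ :=
  ρ * x + β * (ωc * x / (1 + ωc * x)) + β * (ωd * x / (1 + ωd * x))

theorem strictMonoOn_cbfLoad (hρ : 0 < ρ) (hβ : 0 ≤ β) (hωd : 0 ≤ ωd) (hωc : 0 ≤ ωc) :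
    StrictMonoOn (cbfLoad ρ β ωd ωc) (Ici 0) :=
  ((strictMono_mul_left_of_pos hρ).strictMonoOn _).add_monotone
    ((monotoneOn_const_mul_mul_div_one_add_mul hβ hωc).add
      (monotoneOn_const_mul_mul_div_one_add_mul hβ hωd)) |>.congr fun x _ => by
    simp only [cbfLoad, add_assoc]

theorem continuousOn_cbfLoad (hωd : 0 ≤ ωd) (hωc : 0 ≤ ωc) :
    ContinuousOn (cbfLoad ρ β ωd ωc) (Ici 0) :=
  (continuousOn_const.mul continuousOn_id).add
      (continuousOn_const.mul (continuousOn_mul_div_one_add_mul hωc)) |>.add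
    (continuousOn_const.mul (continuousOn_mul_div_one_add_mul hωd))

theorem cbfLoad_zero : cbfLoad ρ β ωd ωc 0 = 0 := by
  simp [cbfLoad]

theorem one_le_cbfLoad_inv (hρ : 0 < ρ) (hβ : 0 ≤ β) (hωd : 0 ≤ ωd) (hωc : 0 ≤ ωc) :
    1 ≤ cbfLoad ρ β ωd ωc ρ⁻¹ := by
  have hc : 0 ≤ β * (ωc * ρ⁻¹ / (1 + ωc * ρ⁻¹)) := by positivity
  have hd : 0 ≤ β * (ωd * ρ⁻¹ / (1 + ωd * ρ⁻¹)) := by positivity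
  rw [cbfLoad, mul_inv_cancel₀ hρ.ne']
  linarith

theorem eq_one_div_iff_cbfLoad_eq_one {x : ℝ} (hρ : 0 < ρ) (hβ : 0 ≤ β) (hωd : 0 ≤ ωd)
    (hωc : 0 ≤ ωc) (hx : 0 ≤ x) :
    x = 1 / (ρ + β * ωc / (1 + ωc * x) + β * ωd / (1 + ωd * x)) ↔ cbfLoad ρ β ωd ωc x = 1 := by
  have hc : 0 < 1 + ωc * x := by positivity
  have hd : 0 < 1 + ωd * x := by positivity
  have hden : 0 < ρ + β * ωc / (1 + ωc * x) + β * ωd / (1 + ωd * x) := by positivity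
  rw [eq_div_iff hden.ne', cbfLoad]
  field_simp

end

theorem cbf_fixed_point_unique (ρ β ωd ωc : ℝ) (hρ : 0 < ρ) (hβ : 0 < β)
    (hωd : 0 < ωd) (hωc : 0 < ωc) :
    ∃! Γ : ℝ, 0 < Γ ∧
      Γ = 1 / (ρ + β * ωc / (1 + ωc * Γ) + β * ωd / (1 + ωd * Γ)) := by
  have hsolve : ∃! Γ : ℝ, 0 < Γ ∧ cbfLoad ρ β ωd ωc Γ = 1 :=
    existsUnique_pos_eq_of_strictMonoOn (strictMonoOn_cbfLoad hρ hβ.le hωd.le hωc.le)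
      (continuousOn_cbfLoad hωd.le hωc.le) (inv_nonneg.mpr hρ.le)
      (cbfLoad_zero.trans_lt one_pos) (one_le_cbfLoad_inv hρ hβ.le hωd.le hωc.le)
  refine (existsUnique_congr fun Γ => and_congr_right fun hΓ => ?_).mpr hsolve
  exact eq_one_div_iff_cbfLoad_eq_one hρ hβ.le hωd.le hωc.le hΓ.le
end

section
/- Define SINR(ρ) = (ω_d/β)·Γ(ρ)·[ρ + βω_c/(1+ω_cΓ(ρ))² + βω_d/(1+ω_dΓ(ρ))²] / (γ_eff/β + ω_d/(1+ω_dΓ(ρ))² + ω_c/(1+ω_cΓ(ρ))²), where Γ(ρ) is the positive solution of Γ = 1/(ρ + βω_c/(1+ω_cΓ) + βω_d/(1+ω_dΓ)) and γ_eff > 0 is a constant. Then ρ* = γ_eff is the unique global maximizer of SINR over ρ ∈ (0,∞), and SINR(ρ*) = ω_d·Γ(ρ*). -/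
private lemma per_term (ω g s : ℝ) (hω : 0 < ω) (hg : 0 < g) (hs : 0 < s)
    (hne : g ≠ s) :
    s / (1 + ω * s) < (s + ω * g ^ 2) / (1 + ω * g) ^ 2 := by
  have hcs : (0:ℝ) < 1 + ω * s := by positivity
  have hcg : (0:ℝ) < (1 + ω * g) ^ 2 := by positivity
  rw [div_lt_div_iff₀ hcs hcg]
  have h : 0 < ω * (g - s) ^ 2 := by
    have := sub_ne_zero.mpr hne
    positivity
  nlinarith [h]

private lemma aux_lt (β ωd ωc γeff g s ρ : ℝ)
    (hβ : 0 < β) (hωd : 0 < ωd) (hωc : 0 < ωc) (hγ : 0 < γeff)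
    (hg : 0 < g) (hs : 0 < s)
    (eρ : ρ = 1 / g - β * ωc / (1 + ωc * g) - β * ωd / (1 + ωd * g))
    (eγ : γeff = 1 / s - β * ωc / (1 + ωc * s) - β * ωd / (1 + ωd * s))
    (hne : g ≠ s) :
    (ωd / β) * g * (ρ + β * ωc / (1 + ωc * g) ^ 2 + β * ωd / (1 + ωd * g) ^ 2) /
      (γeff / β + ωd / (1 + ωd * g) ^ 2 + ωc / (1 + ωc * g) ^ 2) < ωd * s := by
  have hcg : (0:ℝ) < 1 + ωc * g := by positivity
  have hdg : (0:ℝ) < 1 + ωd * g := by positivity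
  have hcs : (0:ℝ) < 1 + ωc * s := by positivity
  have hds : (0:ℝ) < 1 + ωd * s := by positivity
  obtain ⟨Ag, hAg⟩ : ∃ A : ℝ, A = β * ωc / (1 + ωc * g) ^ 2 + β * ωd / (1 + ωd * g) ^ 2 :=
    ⟨_, rfl⟩
  have hAgpos : 0 < Ag := by rw [hAg]; positivity
  have hGA : 0 < γeff + Ag := by positivity
  -- key inequality
  have E1 : g * (ρ + Ag) + β * ωc * (s + ωc * g ^ 2) / (1 + ωc * g) ^ 2
      + β * ωd * (s + ωd * g ^ 2) / (1 + ωd * g) ^ 2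
      = 1 + s * Ag := by
    rw [hAg, eρ]
    field_simp
    ring
  have E2 : s * (γeff + Ag) + β * ωc * (s / (1 + ωc * s))
      + β * ωd * (s / (1 + ωd * s)) = 1 + s * Ag := by
    rw [hAg, eγ]
    field_simp
    ring
  have pc := per_term ωc g s hωc hg hs hne
  have pd := per_term ωd g s hωd hg hs hne
  have pc' : β * ωc * (s / (1 + ωc * s)) < β * ωc * ((s + ωc * g ^ 2) / (1 + ωc * g) ^ 2) :=
    by exact mul_lt_mul_of_pos_left pc (by positivity)
  have pd' : β * ωd * (s / (1 + ωd * s)) < β * ωd * ((s + ωd * g ^ 2) / (1 + ωd * g) ^ 2) :=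
    by exact mul_lt_mul_of_pos_left pd (by positivity)
  have key : g * (ρ + Ag) < s * (γeff + Ag) := by
    have h1 : β * ωc * ((s + ωc * g ^ 2) / (1 + ωc * g) ^ 2)
        = β * ωc * (s + ωc * g ^ 2) / (1 + ωc * g) ^ 2 := by ring
    have h2 : β * ωd * ((s + ωd * g ^ 2) / (1 + ωd * g) ^ 2)
        = β * ωd * (s + ωd * g ^ 2) / (1 + ωd * g) ^ 2 := by ring
    rw [h1] at pc'
    rw [h2] at pd'
    nlinarith [E1, E2, pc', pd']
  -- rewrite denominator
  have hDen : γeff / β + ωd / (1 + ωd * g) ^ 2 + ωc / (1 + ωc * g) ^ 2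
      = (γeff + Ag) / β := by
    rw [hAg]; field_simp; ring
  rw [hDen]
  rw [div_div_eq_mul_div, div_lt_iff₀ hGA]
  have hβne : β ≠ 0 := ne_of_gt hβ
  have expand : ωd / β * g * (ρ + β * ωc / (1 + ωc * g) ^ 2 + β * ωd / (1 + ωd * g) ^ 2) * β
      = ωd * (g * (ρ + Ag)) := by
    rw [hAg]; field_simp; ring
  rw [expand]
  calc ωd * (g * (ρ + Ag)) < ωd * (s * (γeff + Ag)) :=
        mul_lt_mul_of_pos_left key hωd
    _ = ωd * s * (γeff + Ag) := by ring

theorem cbf_sinr_optimal_regularization (β ωd ωc γeff : ℝ)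
    (hβ : 0 < β) (hωd : 0 < ωd) (hωc : 0 < ωc) (hγ : 0 < γeff)
    (Γ : ℝ → ℝ)
    (hΓ : ∀ ρ : ℝ, 0 < ρ → 0 < Γ ρ ∧
      Γ ρ = 1 / (ρ + β * ωc / (1 + ωc * Γ ρ) + β * ωd / (1 + ωd * Γ ρ))) :
    (IsMaxOn
      (fun ρ : ℝ => (ωd / β) * Γ ρ *
        (ρ + β * ωc / (1 + ωc * Γ ρ) ^ 2 + β * ωd / (1 + ωd * Γ ρ) ^ 2) /
        (γeff / β + ωd / (1 + ωd * Γ ρ) ^ 2 + ωc / (1 + ωc * Γ ρ) ^ 2))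
      (Set.Ioi 0) γeff) ∧
    (∀ ρ ∈ Set.Ioi (0:ℝ), ρ ≠ γeff →
      (ωd / β) * Γ ρ *
        (ρ + β * ωc / (1 + ωc * Γ ρ) ^ 2 + β * ωd / (1 + ωd * Γ ρ) ^ 2) /
        (γeff / β + ωd / (1 + ωd * Γ ρ) ^ 2 + ωc / (1 + ωc * Γ ρ) ^ 2) <
      (ωd / β) * Γ γeff *
        (γeff + β * ωc / (1 + ωc * Γ γeff) ^ 2 + β * ωd / (1 + ωd * Γ γeff) ^ 2) /
        (γeff / β + ωd / (1 + ωd * Γ γeff) ^ 2 + ωc / (1 + ωc * Γ γeff) ^ 2)) ∧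
    (ωd / β) * Γ γeff *
        (γeff + β * ωc / (1 + ωc * Γ γeff) ^ 2 + β * ωd / (1 + ωd * Γ γeff) ^ 2) /
        (γeff / β + ωd / (1 + ωd * Γ γeff) ^ 2 + ωc / (1 + ωc * Γ γeff) ^ 2) =
      ωd * Γ γeff := by
  -- extract the fixed-point representation ρ = 1/Γρ - F(Γρ)
  have hrep : ∀ ρ : ℝ, 0 < ρ →
      ρ = 1 / Γ ρ - β * ωc / (1 + ωc * Γ ρ) - β * ωd / (1 + ωd * Γ ρ) := by
    intro ρ hρ
    obtain ⟨hgpos, hfix⟩ := hΓ ρ hρ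
    set g := Γ ρ with hgdef
    have hcg : (0:ℝ) < 1 + ωc * g := by positivity
    have hdg : (0:ℝ) < 1 + ωd * g := by positivity
    have hDpos : 0 < ρ + β * ωc / (1 + ωc * g) + β * ωd / (1 + ωd * g) := by positivity
    have hDne := ne_of_gt hDpos
    have hD : 1 / g = ρ + β * ωc / (1 + ωc * g) + β * ωd / (1 + ωd * g) := by
      conv_lhs => rw [hfix]
      rw [one_div_one_div]
    linarith [hD]
  have hspos := (hΓ γeff hγ).1
  have eγ := hrep γeff hγ
  set s := Γ γeff with hsdef
  have hcs : (0:ℝ) < 1 + ωc * s := by positivity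
  have hds : (0:ℝ) < 1 + ωd * s := by positivity
  -- equality at ρ* = γeff
  have heq : (ωd / β) * s *
      (γeff + β * ωc / (1 + ωc * s) ^ 2 + β * ωd / (1 + ωd * s) ^ 2) /
      (γeff / β + ωd / (1 + ωd * s) ^ 2 + ωc / (1 + ωc * s) ^ 2) = ωd * s := by
    have hden : 0 < γeff / β + ωd / (1 + ωd * s) ^ 2 + ωc / (1 + ωc * s) ^ 2 := by
      positivity
    rw [div_eq_iff (ne_of_gt hden)]
    field_simp
    ring
  -- strict inequality
  have hstrict : ∀ ρ ∈ Set.Ioi (0:ℝ), ρ ≠ γeff →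
      (ωd / β) * Γ ρ *
        (ρ + β * ωc / (1 + ωc * Γ ρ) ^ 2 + β * ωd / (1 + ωd * Γ ρ) ^ 2) /
        (γeff / β + ωd / (1 + ωd * Γ ρ) ^ 2 + ωc / (1 + ωc * Γ ρ) ^ 2) < ωd * s := by
    intro ρ hρ hne
    have hρ0 : 0 < ρ := hρ
    have hgpos := (hΓ ρ hρ0).1
    have eρ := hrep ρ hρ0
    have hgne : Γ ρ ≠ s := by
      intro h
      apply hne
      rw [eρ, h, ← eγ]
    exact aux_lt β ωd ωc γeff (Γ ρ) s ρ hβ hωd hωc hγ hgpos hspos eρ eγ hgne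
  refine ⟨?_, ?_, heq⟩
  · intro ρ hρ
    simp only [Set.mem_setOf_eq]
    rcases eq_or_ne ρ γeff with h | h
    · subst h; exact le_rfl
    · rw [← hsdef, heq]
      exact (hstrict ρ hρ h).le
  · intro ρ hρ hne
    rw [heq]
    exact hstrict ρ hρ hne
end

section
/- Let Γ(ρ) be the positive fixed point of Γ = 1/(ρ + βω_c/(1+ω_cΓ) + βω_d/(1+ω_dΓ)), and define Ψ(ρ) = βω_d/(1+ω_dΓ(ρ))² + βω_c/(1+ω_cΓ(ρ))². Then dΨ/dρ = −2β·(dΓ/dρ)·(ω_d²/(1+ω_dΓ)³ + ω_c²/(1+ω_cΓ)³) > 0, i.e. Ψ is strictly increasing in ρ. -/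
/-!
Γ is the inverse of `γ ↦ ρ(γ) = 1/γ - βω_c/(1+ω_cγ) - βω_d/(1+ω_dγ)`. The product `γ ρ(γ)`
is strictly decreasing, so `ρ` is injective where it is positive and `Γ` is a genuine local
inverse of it; the one-dimensional inverse function theorem then gives `Γ' = 1/ρ'(Γ)`. The
identity `γ ρ'(γ) = -ρ(γ) - βω_c/(1+ω_cγ)² - βω_d/(1+ω_dγ)²` shows `ρ' < 0`, hence `Γ' < 0`,
and the chain rule turns this into `Ψ' = -2βΓ'(ω_d²/(1+ω_dΓ)³ + ω_c²/(1+ω_cΓ)³) > 0`.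
-/

open Set Filter Topology

/-- The parameter `ρ` for which `γ` solves `γ = 1/(ρ + βω_c/(1+ω_cγ) + βω_d/(1+ω_dγ))`. -/
noncomputable def rhoOfGamma (β ωc ωd γ : ℝ) : ℝ :=
  γ⁻¹ - β * ωc / (1 + ωc * γ) - β * ωd / (1 + ωd * γ)

noncomputable def rhoOfGamma' (β ωc ωd γ : ℝ) : ℝ :=
  -(γ ^ 2)⁻¹ + β * ωc ^ 2 / (1 + ωc * γ) ^ 2 + β * ωd ^ 2 / (1 + ωd * γ) ^ 2

theorem strictMonoOn_div_one_add_mul {ω : ℝ} (hω : 0 ≤ ω) :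
    StrictMonoOn (fun x : ℝ => x / (1 + ω * x)) (Ici 0) := by
  intro x hx y hy hxy
  simp only [mem_Ici] at hx hy
  rw [div_lt_div_iff₀ (by positivity) (by positivity)]
  nlinarith

theorem hasStrictDerivAt_div_one_add_mul_pow (a ω γ : ℝ) (n : ℕ) (h : 1 + ω * γ ≠ 0) :
    HasStrictDerivAt (fun x => a / (1 + ω * x) ^ n) (-(n * a * ω) / (1 + ω * γ) ^ (n + 1)) γ := by
  have hlin : HasStrictDerivAt (fun x => 1 + ω * x) ω γ := by
    simpa using ((hasStrictDerivAt_id γ).const_mul ω).const_add 1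
  refine ((hasStrictDerivAt_const γ a).fun_div (hlin.fun_pow n) (pow_ne_zero n h)).congr_deriv ?_
  rcases n with _ | n
  · simp
  · rw [Nat.add_sub_cancel]
    field_simp
    ring

section

variable {β ωc ωd : ℝ}

theorem rhoOfGamma_eq_of_eq_one_div {ρ γ : ℝ}
    (h : γ = 1 / (ρ + β * ωc / (1 + ωc * γ) + β * ωd / (1 + ωd * γ))) :
    rhoOfGamma β ωc ωd γ = ρ := by
  have hinv : γ⁻¹ = ρ + β * ωc / (1 + ωc * γ) + β * ωd / (1 + ωd * γ) := by
    conv_lhs => rw [h]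
    rw [one_div, inv_inv]
  rw [rhoOfGamma, hinv]
  ring

theorem mul_rhoOfGamma {γ : ℝ} (hγ : γ ≠ 0) :
    γ * rhoOfGamma β ωc ωd γ =
      1 - β * ωc * (γ / (1 + ωc * γ)) - β * ωd * (γ / (1 + ωd * γ)) := by
  rw [rhoOfGamma]
  field_simp

theorem mul_rhoOfGamma' {γ : ℝ} (hγ : γ ≠ 0) (hc : 1 + ωc * γ ≠ 0) (hd : 1 + ωd * γ ≠ 0) :
    γ * rhoOfGamma' β ωc ωd γ =
      -rhoOfGamma β ωc ωd γ - β * ωc / (1 + ωc * γ) ^ 2 - β * ωd / (1 + ωd * γ) ^ 2 := by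
  have hterm : ∀ ω : ℝ, 1 + ω * γ ≠ 0 →
      γ * (β * ω ^ 2 / (1 + ω * γ) ^ 2) = β * ω / (1 + ω * γ) - β * ω / (1 + ω * γ) ^ 2 := by
    intro ω h
    field_simp
    ring
  have hinv : γ * (γ ^ 2)⁻¹ = γ⁻¹ := by field_simp
  rw [rhoOfGamma, rhoOfGamma']
  linear_combination hterm ωc hc + hterm ωd hd - hinv

theorem hasStrictDerivAt_rhoOfGamma {γ : ℝ} (hγ : γ ≠ 0) (hc : 1 + ωc * γ ≠ 0)
    (hd : 1 + ωd * γ ≠ 0) :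
    HasStrictDerivAt (rhoOfGamma β ωc ωd) (rhoOfGamma' β ωc ωd γ) γ := by
  have hC := hasStrictDerivAt_div_one_add_mul_pow (β * ωc) ωc γ 1 hc
  have hD := hasStrictDerivAt_div_one_add_mul_pow (β * ωd) ωd γ 1 hd
  simp only [pow_one] at hC hD
  refine (((hasStrictDerivAt_inv hγ).sub hC).sub hD).congr_deriv ?_
  rw [rhoOfGamma']
  ring

variable (hβ : 0 < β) (hωc : 0 < ωc) (hωd : 0 < ωd)
include hβ hωc hωd

theorem strictAntiOn_mul_rhoOfGamma :
    StrictAntiOn (fun γ => γ * rhoOfGamma β ωc ωd γ) (Ioi 0) := by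
  intro x (hx : 0 < x) y (hy : 0 < y) hxy
  have hC := strictMonoOn_div_one_add_mul hωc.le (mem_Ici.2 hx.le) (mem_Ici.2 hy.le) hxy
  have hD := strictMonoOn_div_one_add_mul hωd.le (mem_Ici.2 hx.le) (mem_Ici.2 hy.le) hxy
  dsimp only
  rw [mul_rhoOfGamma hx.ne', mul_rhoOfGamma hy.ne']
  nlinarith [mul_lt_mul_of_pos_left hC (mul_pos hβ hωc),
    mul_lt_mul_of_pos_left hD (mul_pos hβ hωd)]

/-- `γ ρ(γ)` decreases while its factor `γ` increases, so a positive `ρ(γ)` must decrease. -/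
theorem strictAntiOn_rhoOfGamma :
    StrictAntiOn (rhoOfGamma β ωc ωd) {γ | 0 < γ ∧ 0 < rhoOfGamma β ωc ωd γ} := by
  rintro x ⟨hx, -⟩ y ⟨hy, hρy⟩ hxy
  have hprod := strictAntiOn_mul_rhoOfGamma hβ hωc hωd (mem_Ioi.2 hx) (mem_Ioi.2 hy) hxy
  dsimp only at hprod
  nlinarith [mul_lt_mul_of_pos_right hxy hρy]

theorem rhoOfGamma'_neg {γ : ℝ} (hγ : 0 < γ) (hρ : 0 ≤ rhoOfGamma β ωc ωd γ) :
    rhoOfGamma' β ωc ωd γ < 0 := by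
  have hc : 0 < 1 + ωc * γ := by positivity
  have hd : 0 < 1 + ωd * γ := by positivity
  refine neg_of_mul_neg_right ?_ hγ.le
  rw [mul_rhoOfGamma' hγ.ne' hc.ne' hd.ne']
  have : 0 < β * ωc / (1 + ωc * γ) ^ 2 := by positivity
  have : 0 < β * ωd / (1 + ωd * γ) ^ 2 := by positivity
  linarith

theorem hasStrictDerivAt_of_rightInvOn_rhoOfGamma {Γ : ℝ → ℝ}
    (hΓ : ∀ ρ, 0 < ρ → 0 < Γ ρ ∧ rhoOfGamma β ωc ωd (Γ ρ) = ρ) {ρ : ℝ} (hρ : 0 < ρ) :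
    HasStrictDerivAt Γ (rhoOfGamma' β ωc ωd (Γ ρ))⁻¹ ρ := by
  obtain ⟨hγ, hfix⟩ := hΓ ρ hρ
  have hf : HasStrictDerivAt (rhoOfGamma β ωc ωd) (rhoOfGamma' β ωc ωd (Γ ρ)) (Γ ρ) :=
    hasStrictDerivAt_rhoOfGamma hγ.ne' (by positivity) (by positivity)
  have hleft : ∀ᶠ γ in 𝓝 (Γ ρ), Γ (rhoOfGamma β ωc ωd γ) = γ := by
    have hpos : ∀ᶠ γ in 𝓝 (Γ ρ), 0 < γ ∧ 0 < rhoOfGamma β ωc ωd γ :=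
      (lt_mem_nhds hγ).and (hf.hasDerivAt.continuousAt.eventually (lt_mem_nhds (by rwa [hfix])))
    filter_upwards [hpos] with γ ⟨hγ', hργ⟩
    obtain ⟨hΓpos, hΓfix⟩ := hΓ _ hργ
    exact (strictAntiOn_rhoOfGamma hβ hωc hωd).injOn ⟨hΓpos, by rwa [hΓfix]⟩ ⟨hγ', hργ⟩ hΓfix
  have hf' := (rhoOfGamma'_neg hβ hωc hωd hγ (by rw [hfix]; exact hρ.le)).ne
  simpa only [hfix] using hf.to_local_left_inverse hf' hleft

end

theorem hasDerivAt_psi {β ωc ωd : ℝ} {Γ : ℝ → ℝ} {Γ' ρ : ℝ} (hΓ : HasDerivAt Γ Γ' ρ)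
    (hc : 1 + ωc * Γ ρ ≠ 0) (hd : 1 + ωd * Γ ρ ≠ 0) :
    HasDerivAt (fun t => β * ωd / (1 + ωd * Γ t) ^ 2 + β * ωc / (1 + ωc * Γ t) ^ 2)
      (-2 * β * Γ' * (ωd ^ 2 / (1 + ωd * Γ ρ) ^ 3 + ωc ^ 2 / (1 + ωc * Γ ρ) ^ 3)) ρ := by
  have hD := (hasStrictDerivAt_div_one_add_mul_pow (β * ωd) ωd _ 2 hd).hasDerivAt.comp ρ hΓ
  have hC := (hasStrictDerivAt_div_one_add_mul_pow (β * ωc) ωc _ 2 hc).hasDerivAt.comp ρ hΓ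
  refine (hD.add hC).congr_deriv ?_
  push_cast
  ring

theorem cbf_psi_increasing (β ωd ωc : ℝ) (hβ : 0 < β) (hωd : 0 < ωd) (hωc : 0 < ωc)
    (Γ : ℝ → ℝ)
    (hΓ : ∀ ρ : ℝ, 0 < ρ → 0 < Γ ρ ∧
      Γ ρ = 1 / (ρ + β * ωc / (1 + ωc * Γ ρ) + β * ωd / (1 + ωd * Γ ρ))) :
    (∀ ρ : ℝ, 0 < ρ →
      deriv (fun t : ℝ => β * ωd / (1 + ωd * Γ t) ^ 2 + β * ωc / (1 + ωc * Γ t) ^ 2) ρ =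
        -2 * β * deriv Γ ρ *
          (ωd ^ 2 / (1 + ωd * Γ ρ) ^ 3 + ωc ^ 2 / (1 + ωc * Γ ρ) ^ 3) ∧
      0 < deriv (fun t : ℝ => β * ωd / (1 + ωd * Γ t) ^ 2 + β * ωc / (1 + ωc * Γ t) ^ 2) ρ) ∧
    StrictMonoOn (fun t : ℝ => β * ωd / (1 + ωd * Γ t) ^ 2 + β * ωc / (1 + ωc * Γ t) ^ 2)
      (Set.Ioi 0) := by
  have hfix : ∀ ρ, 0 < ρ → 0 < Γ ρ ∧ rhoOfGamma β ωc ωd (Γ ρ) = ρ := fun ρ hρ =>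
    ⟨(hΓ ρ hρ).1, rhoOfGamma_eq_of_eq_one_div (hΓ ρ hρ).2⟩
  have hΨ : ∀ ρ, 0 < ρ →
      HasDerivAt (fun t : ℝ => β * ωd / (1 + ωd * Γ t) ^ 2 + β * ωc / (1 + ωc * Γ t) ^ 2)
        (-2 * β * deriv Γ ρ * (ωd ^ 2 / (1 + ωd * Γ ρ) ^ 3 + ωc ^ 2 / (1 + ωc * Γ ρ) ^ 3)) ρ ∧
      0 < -2 * β * deriv Γ ρ * (ωd ^ 2 / (1 + ωd * Γ ρ) ^ 3 + ωc ^ 2 / (1 + ωc * Γ ρ) ^ 3) := by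
    intro ρ hρ
    obtain ⟨hγ, hργ⟩ := hfix ρ hρ
    have hΓ' := (hasStrictDerivAt_of_rightInvOn_rhoOfGamma hβ hωc hωd hfix hρ).hasDerivAt
    have hΓ'neg : deriv Γ ρ < 0 := by
      rw [hΓ'.deriv, inv_lt_zero]
      exact rhoOfGamma'_neg hβ hωc hωd hγ (by rw [hργ]; exact hρ.le)
    refine ⟨hasDerivAt_psi (hΓ'.deriv ▸ hΓ') (by positivity) (by positivity), ?_⟩
    have hS : 0 < ωd ^ 2 / (1 + ωd * Γ ρ) ^ 3 + ωc ^ 2 / (1 + ωc * Γ ρ) ^ 3 := by positivity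
    exact mul_pos (by nlinarith) hS
  refine ⟨fun ρ hρ => ?_, strictMonoOn_of_deriv_pos (convex_Ioi 0) ?_ ?_⟩
  · rw [(hΨ ρ hρ).1.deriv]
    exact ⟨rfl, (hΨ ρ hρ).2⟩
  · exact fun ρ hρ => (hΨ ρ hρ).1.continuousAt.continuousWithinAt
  · intro ρ hρ
    rw [interior_Ioi] at hρ
    rw [(hΨ ρ hρ).1.deriv]
    exact (hΨ ρ hρ).2
end

section
/- For γ_d > 0 and γ̃ > 0, the function γ_e(ε) = (1 − δ_d(ε) + ε − δ_c(ε))/(δ_d(ε) + δ_c(ε) + 1/γ_d) with δ_d(ε) = 1/((1+ε)γ̃ + 1) and δ_c(ε) = ε, i.e. the effective SNR under ν = 1 (single-cell processing) analog feedback, has a unique stationary point at ε_SCP = 1/√(γ_d·γ̃) − 1; if γ_d·γ̃ > 1 then γ_e is strictly decreasing on [0,∞). -/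
/-!
Writing `u = (1 + ε) γ̃ + 1` and `D = 1/u + ε + 1/γ_d`, the quotient rule gives
`γ_e'(ε) = γ̃ (1 - γ_d γ̃ (1 + ε)²) / (γ_d u² D²)`, a positive multiple of `1 - γ_d γ̃ (1 + ε)²`.
So `γ_e'` vanishes exactly at `1 + ε = 1/√(γ_d γ̃)`, and it is negative on `(0, ∞)` once `γ_d γ̃ > 1`.
-/

open Real Set

noncomputable def directMSE (γt e : ℝ) : ℝ := 1 / ((1 + e) * γt + 1)

noncomputable def effectiveSNR (γd γt e : ℝ) : ℝ :=
  (1 - directMSE γt e + e - e) / (directMSE γt e + e + 1 / γd)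

lemma mul_sq_eq_one_iff_eq_one_div_sqrt {a x : ℝ} (ha : 0 < a) (hx : 0 ≤ x) :
    a * x ^ 2 = 1 ↔ x = 1 / √a := by
  rw [one_div, ← sqrt_inv, eq_comm (a := x), sqrt_eq_iff_eq_sq (inv_nonneg.mpr ha.le) hx,
    mul_eq_one_iff_inv_eq₀ ha.ne']

lemma hasDerivAt_directMSE {γt e : ℝ} (hu : (1 + e) * γt + 1 ≠ 0) :
    HasDerivAt (directMSE γt) (-γt / ((1 + e) * γt + 1) ^ 2) e := by
  have hlin : HasDerivAt (fun x : ℝ => (1 + x) * γt + 1) γt e := by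
    simpa using (((hasDerivAt_id e).const_add 1).mul_const γt).add_const 1
  unfold directMSE
  simpa only [one_div] using hlin.fun_inv hu

lemma hasDerivAt_effectiveSNR {γd γt e : ℝ} (hγd : γd ≠ 0) (hu : (1 + e) * γt + 1 ≠ 0)
    (hD : directMSE γt e + e + 1 / γd ≠ 0) :
    HasDerivAt (effectiveSNR γd γt)
      (γt / (γd * ((1 + e) * γt + 1) ^ 2 * (directMSE γt e + e + 1 / γd) ^ 2) *
        (1 - γd * γt * (1 + e) ^ 2)) e := by
  have hδ := hasDerivAt_directMSE hu
  have hnum := ((hδ.const_sub 1).fun_add (hasDerivAt_id' e)).fun_sub (hasDerivAt_id' e)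
  have hden := (hδ.fun_add (hasDerivAt_id' e)).add_const (1 / γd)
  refine (hnum.fun_div hden hD).congr_deriv ?_
  simp only [directMSE] at hD ⊢
  generalize hue : (1 + e) * γt + 1 = u at hu hD ⊢
  field_simp
  rw [← hue]
  ring

lemma exists_pos_hasDerivAt_effectiveSNR {γd γt e : ℝ} (hγd : 0 < γd) (hγt : 0 < γt)
    (he : 0 ≤ e) :
    ∃ c > 0, HasDerivAt (effectiveSNR γd γt) (c * (1 - γd * γt * (1 + e) ^ 2)) e := by
  have hu : 0 < (1 + e) * γt + 1 := by positivity
  have hD : 0 < directMSE γt e + e + 1 / γd := by unfold directMSE; positivity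
  exact ⟨_, by positivity, hasDerivAt_effectiveSNR hγd.ne' hu.ne' hD.ne'⟩

theorem scp_effective_snr_stationary (γd γt : ℝ) (hγd : 0 < γd) (hγt : 0 < γt) :
    (∀ ε : ℝ, 0 ≤ ε →
      (deriv (fun e : ℝ =>
          (1 - 1 / ((1 + e) * γt + 1) + e - e) /
            (1 / ((1 + e) * γt + 1) + e + 1 / γd)) ε = 0 ↔
        ε = 1 / Real.sqrt (γd * γt) - 1)) ∧
    (1 < γd * γt →
      StrictAntiOn (fun e : ℝ =>
          (1 - 1 / ((1 + e) * γt + 1) + e - e) /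
            (1 / ((1 + e) * γt + 1) + e + 1 / γd))
        (Set.Ici 0)) := by
  change (∀ ε : ℝ, 0 ≤ ε → (deriv (effectiveSNR γd γt) ε = 0 ↔ ε = 1 / √(γd * γt) - 1)) ∧
    (1 < γd * γt → StrictAntiOn (effectiveSNR γd γt) (Ici 0))
  refine ⟨fun ε hε => ?_, fun hprod => ?_⟩
  · obtain ⟨c, hc, hderiv⟩ := exists_pos_hasDerivAt_effectiveSNR hγd hγt hε
    rw [hderiv.deriv, mul_eq_zero, or_iff_right hc.ne', sub_eq_zero, eq_comm,
      mul_sq_eq_one_iff_eq_one_div_sqrt (mul_pos hγd hγt) (by linarith), eq_sub_iff_add_eq,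
      add_comm]
  · refine strictAntiOn_of_deriv_neg (convex_Ici 0) (fun x hx => ?_) (fun x hx => ?_)
    · obtain ⟨_, _, hderiv⟩ := exists_pos_hasDerivAt_effectiveSNR hγd hγt hx
      exact hderiv.continuousAt.continuousWithinAt
    · rw [interior_Ici, mem_Ioi] at hx
      obtain ⟨c, hc, hderiv⟩ := exists_pos_hasDerivAt_effectiveSNR hγd hγt hx.le
      rw [hderiv.deriv]
      exact mul_neg_of_pos_of_neg hc (by nlinarith)
end
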